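/- arXiv:2302.13968 — 2 statements merged into one kernel-verified Lean document; each statement's English description precedes it below -/
import Mathlib

section
/- The group generated by the transport operator is isometric: let R be the continuous linear operator on ℓ² with (Rx)_1 = −x_2 and (Rx)_n = x_{n−1} − x_{n+1} for n ≥ 2. Then for every t ∈ ℝ and every x ∈ ℓ², ‖exp(tR) x‖ = ‖x‖, where exp denotes the exponential in the Banach algebra of continuous linear operators on ℓ². -/
/-!
The transport operator is skew-adjoint: the partial sums of `⟪R x, y⟫ + ⟪x, R y⟫` telescope to
`-(x_N y_{N+1} + x_{N+1} y_N)`, which tends to `0` because the coordinates of an `ℓ²` sequence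
do. Hence `exp (t R)` has adjoint `exp (-t R) = (exp (t R))⁻¹`, i.e. it is unitary.
-/

noncomputable section

/-- The space `ℓ²` of square-summable real sequences. -/
abbrev ell2 : Type := lp (fun _ : ℕ => ℝ) 2

open Filter Topology
open scoped InnerProductSpace ENNReal

theorem lp.tendsto_norm_apply_cofinite_zero {α : Type*} {E : α → Type*}
    [∀ i, NormedAddCommGroup (E i)] {p : ℝ≥0∞} (hp : 0 < p.toReal) (f : lp E p) :
    Tendsto (fun i => ‖f i‖) cofinite (𝓝 0) := by
  have h := ((lp.memℓp f).summable hp).tendsto_cofinite_zero.rpow_const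
    (p := p.toReal⁻¹) (Or.inr (inv_nonneg.mpr hp.le))
  rw [Real.zero_rpow (inv_ne_zero hp.ne')] at h
  refine h.congr fun i => ?_
  rw [← Real.rpow_mul (norm_nonneg _), mul_inv_cancel₀ hp.ne', Real.rpow_one]

theorem ell2.tendsto_apply_atTop_zero (x : ell2) : Tendsto (fun n => x n) atTop (𝓝 0) := by
  rw [tendsto_zero_iff_norm_tendsto_zero, ← Nat.cofinite_eq_atTop]
  exact lp.tendsto_norm_apply_cofinite_zero (by norm_num) x

def transport (x : ℕ → ℝ) : ℕ → ℝ
  | 0 => -x 1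
  | n + 1 => x n - x (n + 2)

theorem sum_range_succ_transport_mul_add_mul_transport (x y : ℕ → ℝ) (N : ℕ) :
    ∑ k ∈ Finset.range (N + 1), (transport x k * y k + x k * transport y k) =
      -(x N * y (N + 1) + x (N + 1) * y N) := by
  induction N with
  | zero => simp only [zero_add, Finset.sum_range_one, transport]; ring
  | succ N ih => rw [Finset.sum_range_succ, ih]; simp only [transport]; ring

theorem inner_add_inner_eq_zero_of_transport {x y u v : ell2}
    (hu : (u : ℕ → ℝ) = transport x) (hv : (v : ℕ → ℝ) = transport y) :
    ⟪u, y⟫_ℝ + ⟪x, v⟫_ℝ = 0 := by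
  have hsum : HasSum (fun k => transport x k * y k + x k * transport y k)
      (⟪u, y⟫_ℝ + ⟪x, v⟫_ℝ) := by
    simpa only [Real.inner_apply, hu, hv] using
      (lp.hasSum_inner (𝕜 := ℝ) u y).add (lp.hasSum_inner x v)
  have hpartial := (hsum.tendsto_sum_nat.comp (tendsto_add_atTop_nat 1)).congr
    (sum_range_succ_transport_mul_add_mul_transport x y)
  have hx := ell2.tendsto_apply_atTop_zero x
  have hy := ell2.tendsto_apply_atTop_zero y
  have hboundary : Tendsto (fun N => -(x N * y (N + 1) + x (N + 1) * y N)) atTop (𝓝 0) := by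
    simpa using ((hx.mul (hy.comp (tendsto_add_atTop_nat 1))).add
      ((hx.comp (tendsto_add_atTop_nat 1)).mul hy)).neg
  exact tendsto_nhds_unique hpartial hboundary

theorem mem_skewAdjoint_of_apply_eq_transport {R : ell2 →L[ℝ] ell2}
    (hR : ∀ x : ell2, (R x : ℕ → ℝ) = transport x) : R ∈ skewAdjoint (ell2 →L[ℝ] ell2) := by
  rw [skewAdjoint.mem_iff, ContinuousLinearMap.star_eq_adjoint, eq_comm,
    ContinuousLinearMap.eq_adjoint_iff]
  intro x y
  rw [neg_apply, inner_neg_left, eq_comm, eq_neg_iff_add_eq_zero, add_comm]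
  exact inner_add_inner_eq_zero_of_transport (hR x) (hR y)

theorem norm_exp_apply_of_mem_skewAdjoint {E : Type*} [NormedAddCommGroup E]
    [InnerProductSpace ℝ E] [CompleteSpace E] {A : E →L[ℝ] E}
    (hA : A ∈ skewAdjoint (E →L[ℝ] E)) (x : E) : ‖NormedSpace.exp A x‖ = ‖x‖ := by
  -- `NormedSpace.exp_add_of_commute` is stated for Banach algebras over `ℚ`.
  let +nondep : NormedAlgebra ℚ (E →L[ℝ] E) := .restrictScalars ℚ ℝ _
  have hu := NormedSpace.exp_mem_unitary_of_mem_skewAdjoint hA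
  exact ContinuousLinearMap.norm_map_of_mem_unitary hu x

/-- **The group generated by the transport operator is isometric**: let `R` be the
continuous linear operator on `ℓ²` with `(Rx)_1 = -x_2` and `(Rx)_n = x_{n-1} - x_{n+1}`
for `n ≥ 2` (sequences are indexed by `ℕ`, so index `k` corresponds to the paper's index
`k + 1`). Then for every `t ∈ ℝ` and every `x ∈ ℓ²`, `‖exp(tR) x‖ = ‖x‖`, where `exp` is
the exponential in the Banach algebra of continuous linear operators on `ℓ²`. -/
theorem exp_transport_operator_isometric
    (R : ell2 →L[ℝ] ell2)
    (hR0 : ∀ x : ell2, (R x : ∀ _ : ℕ, ℝ) 0 = -((x : ∀ _ : ℕ, ℝ) 1))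
    (hR : ∀ x : ell2, ∀ n : ℕ,
      (R x : ∀ _ : ℕ, ℝ) (n + 1) = (x : ∀ _ : ℕ, ℝ) n - (x : ∀ _ : ℕ, ℝ) (n + 2)) :
    ∀ (t : ℝ) (x : ell2), ‖NormedSpace.exp (t • R) x‖ = ‖x‖ := by
  have hR_transport : ∀ x : ell2, (R x : ℕ → ℝ) = transport x := fun x => by
    funext n
    cases n with
    | zero => exact hR0 x
    | succ n => exact hR x n
  intro t x
  exact norm_exp_apply_of_mem_skewAdjoint
    (skewAdjoint.smul_mem t (mem_skewAdjoint_of_apply_eq_transport hR_transport)) x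

end
end

section
/- Disintegration bound for the distance of the zero-started state to the invariant law (Lemma 3.6, quantitative form): let ν > 0, p ≥ 1, t ≥ 0, and let C and G be independent random elements of ℓ² (on a common probability space) with E[‖C‖^p] < ∞ and E[‖G‖^p] < ∞. Assume the invariance property that exp(t(R − νI)) G + C has the same law as G. Then W_p(C, G) ≤ e^{−νt} (E[‖G‖^p])^{1/p}; in particular, for p = 1, W_1(C, G) ≤ e^{−νt} E[‖G‖]. -/
/-!
By invariance, `(C, exp(t(R - νI)) G + C)` is a coupling of the laws of `C` and `G`; it moves
each point by `exp(t(R - νI)) G`. The transport operator is skew, `⟪R x, x⟫ = 0` (the sum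
telescopes), so `s ↦ e^{2νs} ‖exp(s(R - νI)) x‖²` has zero derivative and
`‖exp(t(R - νI)) x‖ = e^{-νt} ‖x‖`. The cost of this coupling is therefore
`e^{-νt} (E ‖G‖^p)^{1/p}`.
-/

open MeasureTheory

noncomputable section

instance : MeasurableSpace ell2 := borel ell2
instance : BorelSpace ell2 := ⟨rfl⟩

/-- The Wasserstein–Kantorovich–Rubinstein distance of order `p` between two measures. -/
def wassersteinW {E : Type*} [NormedAddCommGroup E] [MeasurableSpace E]
    (p : ℝ) (μ ν : Measure E) : ENNReal :=
  (⨅ π ∈ {π : Measure (E × E) | π.map Prod.fst = μ ∧ π.map Prod.snd = ν},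
    ∫⁻ q, ENNReal.ofReal (‖q.1 - q.2‖ ^ p) ∂π) ^ (1 / p)

open scoped InnerProductSpace

theorem HilbertBasis.separableSpace {ι 𝕜 E : Type*} [Countable ι] [RCLike 𝕜]
    [NormedAddCommGroup E] [InnerProductSpace 𝕜 E] (b : HilbertBasis ι 𝕜 E) :
    TopologicalSpace.SeparableSpace E := by
  rw [← TopologicalSpace.isSeparable_univ_iff, ← Submodule.top_coe (R := 𝕜), ← b.dense_span,
    Submodule.topologicalClosure_coe]
  exact (Set.countable_range b).isSeparable.span.closure

instance : TopologicalSpace.SeparableSpace ell2 :=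
  (HilbertBasis.ofRepr (LinearIsometryEquiv.refl ℝ ell2)).separableSpace

instance : SecondCountableTopology ell2 :=
  UniformSpace.secondCountable_of_separable ell2

theorem summable_mul_succ_of_summable_sq {x : ℕ → ℝ} (hx : Summable fun n => x n ^ 2) :
    Summable fun n => x n * x (n + 1) := by
  refine .of_norm_bounded (hx.add ((summable_nat_add_iff 1).2 hx)) fun n => ?_
  rw [Real.norm_eq_abs, abs_mul]
  nlinarith [sq_nonneg (|x n| - |x (n + 1)|), sq_abs (x n), sq_abs (x (n + 1))]

theorem inner_apply_self_eq_zero_of_transport (R : ell2 →L[ℝ] ell2)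
    (hR0 : ∀ x : ell2, (R x : ∀ _ : ℕ, ℝ) 0 = -((x : ∀ _ : ℕ, ℝ) 1))
    (hR : ∀ x : ell2, ∀ n : ℕ,
      (R x : ∀ _ : ℕ, ℝ) (n + 1) = (x : ∀ _ : ℕ, ℝ) n - (x : ∀ _ : ℕ, ℝ) (n + 2))
    (x : ell2) : ⟪R x, x⟫_ℝ = 0 := by
  have hsq : Summable fun n => x n ^ 2 := by
    simpa [sq] using lp.summable_inner (𝕜 := ℝ) x x
  have hb := summable_mul_succ_of_summable_sq hsq
  have hRx : Summable fun n => x n * R x n := by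
    simpa using lp.summable_inner (𝕜 := ℝ) (R x) x
  have hstep : ∀ n, x (n + 1) * R x (n + 1) = x n * x (n + 1) - x (n + 1) * x (n + 1 + 1) := by
    intro n; rw [hR x n]; ring
  rw [lp.inner_eq_tsum]
  simp only [RCLike.inner_apply, conj_trivial]
  rw [hRx.tsum_eq_zero_add, tsum_congr hstep, hb.tsum_sub ((summable_nat_add_iff 1).2 hb),
    hb.tsum_eq_zero_add, hR0]
  ring

theorem norm_exp_smul_apply_of_inner_self {E : Type*} [NormedAddCommGroup E]
    [InnerProductSpace ℝ E] [CompleteSpace E] (A : E →L[ℝ] E) (c : ℝ)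
    (hA : ∀ y, ⟪y, A y⟫_ℝ = c * ‖y‖ ^ 2) (t : ℝ) (x : E) :
    ‖NormedSpace.exp (t • A) x‖ = Real.exp (c * t) * ‖x‖ := by
  set u : ℝ → E := fun s => NormedSpace.exp (s • A) x
  have hu : ∀ s, HasDerivAt u (A (u s)) s := fun s => by
    simpa [u] using (hasDerivAt_exp_smul_const' A s).clm_apply (hasDerivAt_const s x)
  have hconst : ∀ s, HasDerivAt (fun s => Real.exp (-(2 * c) * s) * ‖u s‖ ^ 2) 0 s := by
    intro s
    have := ((hasDerivAt_id s).const_mul (-(2 * c))).exp.mul (hu s).norm_sq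
    rw [hA] at this
    exact this.congr_deriv (by ring)
  have h := is_const_of_deriv_eq_zero (fun s => (hconst s).differentiableAt)
    (fun s => (hconst s).deriv) t 0
  simp only [mul_zero, Real.exp_zero, one_mul, u, zero_smul, NormedSpace.exp_zero,
    one_apply_eq_self] at h
  have he : Real.exp (c * t) ^ 2 * Real.exp (-(2 * c) * t) = 1 := by
    rw [sq, ← Real.exp_add, ← Real.exp_add, ← Real.exp_zero]
    ring_nf
  refine (sq_eq_sq₀ (norm_nonneg _) (by positivity)).1 ?_
  rw [mul_pow, ← h, ← mul_assoc, he, one_mul]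

theorem norm_exp_transport_sub_smul_apply (R : ell2 →L[ℝ] ell2)
    (hR0 : ∀ x : ell2, (R x : ∀ _ : ℕ, ℝ) 0 = -((x : ∀ _ : ℕ, ℝ) 1))
    (hR : ∀ x : ell2, ∀ n : ℕ,
      (R x : ∀ _ : ℕ, ℝ) (n + 1) = (x : ∀ _ : ℕ, ℝ) n - (x : ∀ _ : ℕ, ℝ) (n + 2))
    (ν t : ℝ) (x : ell2) :
    ‖NormedSpace.exp (t • (R - ν • (1 : ell2 →L[ℝ] ell2))) x‖ = Real.exp (-ν * t) * ‖x‖ := by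
  refine norm_exp_smul_apply_of_inner_self _ (-ν) (fun y => ?_) t x
  rw [sub_apply, smul_apply, one_apply_eq_self, inner_sub_right, real_inner_comm,
    inner_apply_self_eq_zero_of_transport R hR0 hR, real_inner_smul_right,
    real_inner_self_eq_norm_sq]
  ring

theorem wassersteinW_map_le {Ω E : Type*} [MeasurableSpace Ω] [NormedAddCommGroup E]
    [MeasurableSpace E] [BorelSpace E] [SecondCountableTopology E] (μ : Measure Ω) {p : ℝ}
    (hp : 0 ≤ p) {X Y : Ω → E} (hX : Measurable X) (hY : Measurable Y) :
    wassersteinW p (μ.map X) (μ.map Y) ≤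
      (∫⁻ ω, ENNReal.ofReal (‖X ω - Y ω‖ ^ p) ∂μ) ^ (1 / p) := by
  have hXY : Measurable fun ω => (X ω, Y ω) := hX.prodMk hY
  have hcost : Measurable fun q : E × E => ENNReal.ofReal (‖q.1 - q.2‖ ^ p) :=
    ((measurable_fst.sub measurable_snd).norm.pow_const p).ennreal_ofReal
  refine ENNReal.rpow_le_rpow ?_ (by positivity)
  rw [← lintegral_map hcost hXY]
  refine iInf₂_le _ ⟨?_, ?_⟩
  · rw [Measure.map_map measurable_fst hXY]; rfl
  · rw [Measure.map_map measurable_snd hXY]; rfl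

theorem disintegration_bound_general
    {Ω : Type*} [MeasurableSpace Ω] (ℙ : Measure Ω)
    (ν p t : ℝ) (hp : 1 ≤ p)
    (R : ell2 →L[ℝ] ell2)
    (hR0 : ∀ x : ell2, (R x : ∀ _ : ℕ, ℝ) 0 = -((x : ∀ _ : ℕ, ℝ) 1))
    (hR : ∀ x : ell2, ∀ n : ℕ,
      (R x : ∀ _ : ℕ, ℝ) (n + 1) = (x : ∀ _ : ℕ, ℝ) n - (x : ∀ _ : ℕ, ℝ) (n + 2))
    (C G : Ω → ell2) (hC : Measurable C) (hG : Measurable G)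
    (hinv : ℙ.map (fun ω =>
        NormedSpace.exp (t • (R - ν • (1 : ell2 →L[ℝ] ell2))) (G ω) + C ω) = ℙ.map G) :
    wassersteinW p (ℙ.map C) (ℙ.map G) ≤
      ENNReal.ofReal (Real.exp (-ν * t)) *
        (∫⁻ ω, ENNReal.ofReal (‖G ω‖ ^ p) ∂ℙ) ^ (1 / p) := by
  set S := NormedSpace.exp (t • (R - ν • (1 : ell2 →L[ℝ] ell2)))
  have hp0 : 0 < p := by linarith
  have hcost : ∀ ω, ENNReal.ofReal (‖C ω - (S (G ω) + C ω)‖ ^ p) =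
      ENNReal.ofReal (Real.exp (-ν * t)) ^ p * ENNReal.ofReal (‖G ω‖ ^ p) := fun ω => by
    rw [sub_add_cancel_right, norm_neg, norm_exp_transport_sub_smul_apply R hR0 hR,
      Real.mul_rpow (by positivity) (norm_nonneg _), ENNReal.ofReal_mul (by positivity),
      ENNReal.ofReal_rpow_of_nonneg (by positivity) hp0.le]
  calc wassersteinW p (ℙ.map C) (ℙ.map G)
      ≤ (∫⁻ ω, ENNReal.ofReal (‖C ω - (S (G ω) + C ω)‖ ^ p) ∂ℙ) ^ (1 / p) := by
        rw [← hinv]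
        exact wassersteinW_map_le ℙ hp0.le hC ((S.continuous.measurable.comp hG).add hC)
    _ = ENNReal.ofReal (Real.exp (-ν * t)) * (∫⁻ ω, ENNReal.ofReal (‖G ω‖ ^ p) ∂ℙ) ^ (1 / p) := by
        simp_rw [hcost]
        rw [lintegral_const_mul' _ _ (ENNReal.rpow_ne_top_of_nonneg hp0.le ENNReal.ofReal_ne_top),
          ENNReal.mul_rpow_of_nonneg _ _ (by positivity), ← ENNReal.rpow_mul,
          mul_one_div_cancel hp0.ne', ENNReal.rpow_one]

/-- **Disintegration bound for the distance of the zero-started state to the invariant law**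
(Lemma 3.6, quantitative form): let `ν > 0`, `p ≥ 1`, `t ≥ 0`, and let `C, G` be independent
random elements of `ℓ²` with finite `p`-th moments. Here `R` is the transport operator,
`(Rx)_1 = -x_2`, `(Rx)_n = x_{n-1} - x_{n+1}` for `n ≥ 2` (sequences indexed by `ℕ`, index
`k` corresponding to the paper's `k + 1`). If `exp(t(R - νI)) G + C` has the same law as
`G`, then `W_p(C, G) ≤ e^{-νt} (E[‖G‖^p])^{1/p}`. -/
theorem disintegration_bound
    {Ω : Type*} [MeasurableSpace Ω] (ℙ : Measure Ω) [IsProbabilityMeasure ℙ]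
    (ν p t : ℝ) (hν : 0 < ν) (hp : 1 ≤ p) (ht : 0 ≤ t)
    (R : ell2 →L[ℝ] ell2)
    (hR0 : ∀ x : ell2, (R x : ∀ _ : ℕ, ℝ) 0 = -((x : ∀ _ : ℕ, ℝ) 1))
    (hR : ∀ x : ell2, ∀ n : ℕ,
      (R x : ∀ _ : ℕ, ℝ) (n + 1) = (x : ∀ _ : ℕ, ℝ) n - (x : ∀ _ : ℕ, ℝ) (n + 2))
    (C G : Ω → ell2) (hC : Measurable C) (hG : Measurable G)
    (hindep : ProbabilityTheory.IndepFun C G ℙ)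
    (hCmom : ∫⁻ ω, ENNReal.ofReal (‖C ω‖ ^ p) ∂ℙ < ⊤)
    (hGmom : ∫⁻ ω, ENNReal.ofReal (‖G ω‖ ^ p) ∂ℙ < ⊤)
    (hinv : ℙ.map (fun ω =>
        NormedSpace.exp (t • (R - ν • (1 : ell2 →L[ℝ] ell2))) (G ω) + C ω) = ℙ.map G) :
    wassersteinW p (ℙ.map C) (ℙ.map G) ≤
      ENNReal.ofReal (Real.exp (-ν * t)) *
        (∫⁻ ω, ENNReal.ofReal (‖G ω‖ ^ p) ∂ℙ) ^ (1 / p) :=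
  disintegration_bound_general ℙ ν p t hp R hR0 hR C G hC hG hinv
end
end
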